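/- arXiv:1708.07090 — 7 statements merged into one kernel-verified Lean document; each statement's English description precedes it below -/
import Mathlib

section
/- Let λ be a rigid C_n partition. Then (i) for every i ≥ 1, λ^T_{2i−1} and λ^T_{2i} have the same parity (the longest two rows of the transposed diagram have the same parity, and this pairwise pattern continues); (ii) if λ_1 is odd (i.e. the transposed diagram has an odd number of rows), then λ^T_{λ_1} (the shortest row) is even. -/
/-!
The difference `λ^T_k - λ^T_(k+1)` is the multiplicity of `k` in `λ`. For odd `k = 2i - 1` this
multiplicity is even, which gives (i); and `λ^T_(λ_1)` is the multiplicity of the largest part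
`λ_1`, even when `λ_1` is odd, which gives (ii).
-/

namespace List

theorem countP_le_eq_countP_succ_le_add_count (k : ℕ) (l : List ℕ) :
    l.countP (fun a => decide (k ≤ a)) = l.countP (fun a => decide (k + 1 ≤ a)) + l.count k := by
  induction l with
  | nil => rfl
  | cons a l ih =>
    simp only [countP_cons, count_cons, ih, beq_iff_eq, decide_eq_true_eq]
    split_ifs <;> omega

theorem countP_le_eq_count_of_forall_le {k : ℕ} {l : List ℕ} (hl : ∀ a ∈ l, a ≤ k) :
    l.countP (fun a => decide (k ≤ a)) = l.count k := by
  rw [countP_le_eq_countP_succ_le_add_count, countP_eq_zero.mpr, zero_add]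
  intro a ha
  simpa using hl a ha

end List

theorem rigid_Cn_partition_structure_general (lam : List ℕ)
    (hsort : lam.Pairwise (· ≥ ·))
    (hCn : ∀ m : ℕ, Odd m → Even (lam.count m)) :
    (∀ i : ℕ, 1 ≤ i →
      (lam.countP (fun a => decide (2 * i - 1 ≤ a))) % 2
        = (lam.countP (fun a => decide (2 * i ≤ a))) % 2) ∧
    (Odd (lam.getD 0 0) →
      Even (lam.countP (fun a => decide (lam.getD 0 0 ≤ a)))) := by
  constructor
  · intro i hi
    have hsucc : 2 * i - 1 + 1 = 2 * i := by omega
    obtain ⟨c, hc⟩ := hCn (2 * i - 1) ⟨i - 1, by omega⟩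
    rw [List.countP_le_eq_countP_succ_le_add_count, hsucc, hc]
    omega
  · intro hodd
    cases lam with
    | nil => simp
    | cons h t =>
      rw [List.getD_cons_zero] at hodd ⊢
      have hle : ∀ a ∈ h :: t, a ≤ h := by
        simpa using (List.pairwise_cons.mp hsort).1
      rw [List.countP_le_eq_count_of_forall_le hle]
      exact hCn h hodd

/-- Structure of rigid `C_n` partitions: for a partition `lam` of `2n`
(weakly decreasing, positive parts) in which every odd integer occurs an even
number of times, with no gaps and no even integer occurring exactly twice:
(i) for every `i ≥ 1` the rows `λ^T_{2i-1}` and `λ^T_{2i}` of the transposed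
diagram have the same parity (so the longest two rows have the same parity,
and this pairwise pattern continues); (ii) if `λ_1` is odd (the transposed
diagram has an odd number of rows) then the shortest row `λ^T_{λ_1}` is even.
Here `λ^T_k = #{ i : λ_i ≥ k }`. -/
theorem rigid_Cn_partition_structure (n : ℕ) (hn : 0 < n) (lam : List ℕ)
    (hsort : lam.Pairwise (· ≥ ·))
    (hpos : ∀ x ∈ lam, 0 < x)
    (hsum : lam.sum = 2 * n)
    (hCn : ∀ m : ℕ, Odd m → Even (lam.count m))
    (hgap : ∀ i : ℕ, i + 1 < lam.length → lam.getD i 0 ≤ lam.getD (i + 1) 0 + 1)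
    (hrig : ∀ m : ℕ, Even m → lam.count m ≠ 2) :
    (∀ i : ℕ, 1 ≤ i →
      (lam.countP (fun a => decide (2 * i - 1 ≤ a))) % 2
        = (lam.countP (fun a => decide (2 * i ≤ a))) % 2) ∧
    (Odd (lam.getD 0 0) →
      Even (lam.countP (fun a => decide (lam.getD 0 0 ≤ a)))) :=
  rigid_Cn_partition_structure_general lam hsort hCn
end

section
/- Let λ be a B_n partition with length l (so l is odd). Then exactly (l+1)/2 of the numbers s_k = l − k + λ_k (1 ≤ k ≤ l) are odd and exactly (l−1)/2 of them are even. Consequently, the symbol of λ in the B_n theory has (l+1)/2 entries in its top row and (l−1)/2 entries in its bottom row. -/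
/-- `svals μ` lists the numbers `s_k = l - k + μ_k` (`1 ≤ k ≤ l`, `l` the
length of `μ`), computed with 0-based indices: entry `k` is `(l - 1 - k) + μ_k`.
For weakly decreasing `μ` this list is strictly decreasing. -/
def svals (μ : List ℕ) : List ℕ :=
  μ.mapIdx (fun k a => (μ.length - 1 - k) + a)

/-- The odd values `2f_1+1 < … < 2f_M+1` of `svals μ`, in increasing order. -/
def oddVals (μ : List ℕ) : List ℕ :=
  ((svals μ).filter (fun x => decide (x % 2 = 1))).reverse

/-- The even values `2g_1 < … < 2g_{M'}` of `svals μ`, in increasing order. -/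
def evenVals (μ : List ℕ) : List ℕ :=
  ((svals μ).filter (fun x => decide (x % 2 = 0))).reverse

/-- The top row of the symbol of `μ`: `α_i = f_i - i + 1` where
`2f_i + 1` is the `i`-th smallest odd value of `svals μ` (0-based entry `i`
is `α_{i+1} = f_{i+1} - i`). -/
def topRow (μ : List ℕ) : List ℕ :=
  (oddVals μ).mapIdx (fun i v => (v - 1) / 2 - i)

/-- The bottom row of the symbol of `μ`: `β_i = g_i - i + 1` where `2g_i` is
the `i`-th smallest even value of `svals μ`. -/
def botRow (μ : List ℕ) : List ℕ :=
  (evenVals μ).mapIdx (fun i v => v / 2 - i)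

/-!
Sorting puts equal parts next to each other, so when every even part has even multiplicity the
parts split, from the top, into single odd parts and pairs of equal even parts. The two entries
`s_k, s_{k+1}` of such a pair differ by one, giving one odd and one even value, while a single
odd part gives an odd `s_k` exactly when an even number of parts follow it. Counting from the
bottom, this gives `⌈l/2⌉` odd and `⌊l/2⌋` even values. Finally `l` is odd, since every pair has
even sum, so `2n+1 ≡ l (mod 2)`.
-/

inductive EvenPartsPaired : List ℕ → Prop
  | nil : EvenPartsPaired []
  | odd {a : ℕ} {μ : List ℕ} : Odd a → EvenPartsPaired μ → EvenPartsPaired (a :: μ)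
  | even {a : ℕ} {μ : List ℕ} : Even a → EvenPartsPaired μ → EvenPartsPaired (a :: a :: μ)

theorem svals_cons (a : ℕ) (μ : List ℕ) : svals (a :: μ) = (μ.length + a) :: svals μ := by
  apply List.ext_getElem
  · simp [svals]
  · rintro (_ | i) _ _
    · simp [svals]
    · simp only [svals, List.getElem_cons_succ, List.getElem_mapIdx, List.length_cons]
      omega

theorem length_svals (μ : List ℕ) : (svals μ).length = μ.length :=
  List.length_mapIdx

theorem List.countP_mod_two_eq_zero_eq_length_sub (l : List ℕ) :
    l.countP (fun x => decide (x % 2 = 0)) = l.length - l.countP (fun x => decide (x % 2 = 1)) := by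
  rw [List.length_eq_countP_add_countP (fun x => decide (x % 2 = 1)), Nat.add_sub_cancel_left]
  exact List.countP_congr fun x _ => by simp only [decide_eq_true_eq]; omega

namespace EvenPartsPaired

variable {μ : List ℕ}

theorem countP_odd_svals (h : EvenPartsPaired μ) :
    (svals μ).countP (fun x => decide (x % 2 = 1)) = (μ.length + 1) / 2 := by
  induction h with
  | nil => rfl
  | @odd a μ ha _ ih =>
    have := Nat.odd_iff.mp ha
    rw [svals_cons, List.countP_cons, ih]
    simp only [List.length_cons, decide_eq_true_eq]
    split_ifs <;> omega
  | @even a μ ha _ ih =>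
    have := Nat.even_iff.mp ha
    rw [svals_cons, svals_cons, List.countP_cons, List.countP_cons, ih]
    simp only [List.length_cons, decide_eq_true_eq]
    split_ifs <;> omega

theorem countP_even_svals (h : EvenPartsPaired μ) :
    (svals μ).countP (fun x => decide (x % 2 = 0)) = μ.length / 2 := by
  rw [List.countP_mod_two_eq_zero_eq_length_sub, h.countP_odd_svals, length_svals]
  omega

theorem sum_mod_two (h : EvenPartsPaired μ) : μ.sum % 2 = μ.length % 2 := by
  induction h with
  | nil => rfl
  | @odd a μ ha _ ih =>
    have := Nat.odd_iff.mp ha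
    simp only [List.sum_cons, List.length_cons]
    omega
  | @even a μ ha _ ih =>
    have := Nat.even_iff.mp ha
    simp only [List.sum_cons, List.length_cons]
    omega

end EvenPartsPaired

section EvenMultiplicities

variable {a : ℕ} {μ : List ℕ}

theorem even_count_of_even_count_cons_of_not_even (ha : ¬Even a)
    (h : ∀ m : ℕ, Even m → Even ((a :: μ).count m)) : ∀ m : ℕ, Even m → Even (μ.count m) := by
  intro m hm
  have hma : a ≠ m := by rintro rfl; exact ha hm
  simpa only [List.count_cons_of_ne hma] using h m hm

theorem even_count_of_even_count_cons_cons (h : ∀ m : ℕ, Even m → Even ((a :: a :: μ).count m)) :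
    ∀ m : ℕ, Even m → Even (μ.count m) := by
  intro m hm
  have := h m hm
  rw [List.count_cons, List.count_cons] at this
  split_ifs at this <;> simpa [Nat.even_add_one] using this

theorem mem_of_even_count_cons_self (h : Even ((a :: μ).count a)) : a ∈ μ := by
  rw [List.count_cons_self, Nat.even_add_one] at h
  exact List.count_pos_iff.mp (Nat.pos_of_ne_zero fun h0 => h (h0 ▸ ⟨0, rfl⟩))

end EvenMultiplicities

theorem evenPartsPaired_of_pairwise_ge : ∀ {μ : List ℕ}, μ.Pairwise (· ≥ ·) →
    (∀ m : ℕ, Even m → Even (μ.count m)) → EvenPartsPaired μ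
  | [], _, _ => .nil
  | [a], _, hB => by
    have ha : ¬Even a := fun ha => List.not_mem_nil (mem_of_even_count_cons_self (hB a ha))
    exact .odd (Nat.not_even_iff_odd.mp ha) .nil
  | a :: b :: μ, hs, hB => by
    by_cases ha : Even a
    · have hab : b = a := by
        have hle : b ≤ a := List.rel_of_pairwise_cons hs List.mem_cons_self
        rcases List.mem_cons.mp (mem_of_even_count_cons_self (hB a ha)) with h | h
        · exact h.symm
        · have := List.rel_of_pairwise_cons hs.of_cons h
          omega
      subst hab
      exact .even ha (evenPartsPaired_of_pairwise_ge hs.of_cons.of_cons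
        (even_count_of_even_count_cons_cons hB))
    · exact .odd (Nat.not_even_iff_odd.mp ha) (evenPartsPaired_of_pairwise_ge hs.of_cons
        (even_count_of_even_count_cons_of_not_even ha hB))

theorem length_topRow (μ : List ℕ) :
    (topRow μ).length = (svals μ).countP (fun x => decide (x % 2 = 1)) := by
  rw [topRow, List.length_mapIdx, oddVals, List.length_reverse, List.countP_eq_length_filter]

theorem length_botRow (μ : List ℕ) :
    (botRow μ).length = (svals μ).countP (fun x => decide (x % 2 = 0)) := by
  rw [botRow, List.length_mapIdx, evenVals, List.length_reverse, List.countP_eq_length_filter]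

theorem Bn_symbol_row_sizes_general (n : ℕ) (lam : List ℕ)
    (hsort : lam.Pairwise (· ≥ ·))
    (hsum : lam.sum = 2 * n + 1)
    (hBn : ∀ m : ℕ, Even m → Even (lam.count m)) :
    ((svals lam).countP (fun x => decide (x % 2 = 1))) = (lam.length + 1) / 2 ∧
    ((svals lam).countP (fun x => decide (x % 2 = 0))) = (lam.length - 1) / 2 ∧
    (topRow lam).length = (lam.length + 1) / 2 ∧
    (botRow lam).length = (lam.length - 1) / 2 := by
  have hpaired := evenPartsPaired_of_pairwise_ge hsort hBn
  have hlen : lam.length % 2 = 1 := by rw [← hpaired.sum_mod_two, hsum]; omega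
  have hodd := hpaired.countP_odd_svals
  have heven : (svals lam).countP (fun x => decide (x % 2 = 0)) = (lam.length - 1) / 2 := by
    rw [hpaired.countP_even_svals]; omega
  exact ⟨hodd, heven, length_topRow lam ▸ hodd, length_botRow lam ▸ heven⟩

/-- For a `B_n` partition `lam` of `2n+1` with length `l`, exactly `(l+1)/2`
of the numbers `s_k = l - k + λ_k` are odd and exactly `(l-1)/2` are even;
consequently the symbol of `lam` in the `B_n` theory has `(l+1)/2` entries in
its top row and `(l-1)/2` entries in its bottom row. -/
theorem Bn_symbol_row_sizes (n : ℕ) (lam : List ℕ)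
    (hsort : lam.Pairwise (· ≥ ·))
    (hpos : ∀ x ∈ lam, 0 < x)
    (hsum : lam.sum = 2 * n + 1)
    (hBn : ∀ m : ℕ, Even m → Even (lam.count m)) :
    ((svals lam).countP (fun x => decide (x % 2 = 1))) = (lam.length + 1) / 2 ∧
    ((svals lam).countP (fun x => decide (x % 2 = 0))) = (lam.length - 1) / 2 ∧
    (topRow lam).length = (lam.length + 1) / 2 ∧
    (botRow lam).length = (lam.length - 1) / 2 :=
  Bn_symbol_row_sizes_general n lam hsort hsum hBn
end

section
/- (Rule B) Let μ = (μ_1 ≥ … ≥ μ_l) be a weakly decreasing sequence of nonnegative integers, let 1 ≤ i ≤ l−1 satisfy μ_i = μ_{i+1} and (i = 1 or μ_{i−1} ≥ μ_i + 1), and let μ' be obtained from μ by adding 1 to each of μ_i and μ_{i+1}. Write (α, β) and (α', β') for the symbols of μ and μ'. If s_i = l − i + μ_i is even, then s_{i+1} = s_i − 1 is odd, say the j-th smallest odd value of s; in this case β' = β, α'_a = α_a for all a ≠ j, and α'_j = α_j + 1. If s_i is odd, then s_{i+1} is the j-th smallest even value of s for some j, and α' = α, β'_b = β_b for all b ≠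 j, β'_j = β_j + 1. In other words, after adding a row 1^2 to two equal parts, the entry of the symbol corresponding to the lower part increases by one while all other entries are unchanged. -/
/-!
Put `c = s_{i+1}`. Since `μ_i = μ_{i+1}` we have `s_i = c + 1`, and adding `1` to both parts
replaces the adjacent pair `(c + 1, c)` of `s` by `(c + 2, c + 1)`, leaving all other values in
place. The values of the parity of `c + 1` are therefore unchanged, and so is the row of the symbol
built from them. Among the values of the parity `r` of `c`, the single value `c` becomes `c + 2` at
the same position `j`, so the `j`-th entry `(c - r) / 2 - j` grows by one: the subtraction does not
truncate, because the `j` values of parity `r` below `c` are distinct, so `2 j ≤ c - r`.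
-/

theorem List.mapIdx_append_cons_eq_set {α β : Type*} (f : ℕ → α → β) (L R : List α)
    (x y : α) :
    (L ++ y :: R).mapIdx f = ((L ++ x :: R).mapIdx f).set L.length (f L.length y) := by
  rw [← List.mapIdx_set]
  simp

theorem List.eq_take_append_getD_cons_getD_cons {α : Type*} {L : List α} {i : ℕ}
    (hi : i + 1 < L.length) (d : α) :
    L = L.take i ++ L.getD i d :: L.getD (i + 1) d :: L.drop (i + 2) := by
  rw [List.getD_eq_getElem _ _ (by omega), List.getD_eq_getElem _ _ hi,
    ← List.drop_eq_getElem_cons hi, ← List.drop_eq_getElem_cons, List.take_append_drop]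

theorem two_mul_length_le_of_pairwise_gt {c : ℕ} {L : List ℕ} (hL : (c :: L).Pairwise (· > ·))
    (hpar : ∀ x ∈ L, x % 2 = c % 2) : 2 * L.length ≤ c := by
  induction L generalizing c with
  | nil => simp
  | cons x L ih =>
    obtain ⟨hc, hxL⟩ := List.pairwise_cons.1 hL
    have hxc : x < c := hc x (by simp)
    have hx : x % 2 = c % 2 := hpar x (by simp)
    have := ih hxL (fun y hy => (hpar y (by simp [hy])).trans hx.symm)
    simp only [List.length_cons]
    omega

theorem pairwise_gt_svals {μ : List ℕ} (hμ : μ.Pairwise (· ≥ ·)) :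
    (svals μ).Pairwise (· > ·) := by
  rw [List.pairwise_iff_getElem] at hμ ⊢
  intro k k' hk hk' hkk'
  simp only [svals, List.length_mapIdx, List.getElem_mapIdx] at hk hk' ⊢
  have := hμ k k' hk hk' hkk'
  omega

theorem exists_svals_append_cons_cons (X Y : List ℕ) (m : ℕ) :
    ∃ Xs Ys c, Xs.length = X.length ∧ svals (X ++ m :: m :: Y) = Xs ++ (c + 1) :: c :: Ys ∧
      svals (X ++ (m + 1) :: (m + 1) :: Y) = Xs ++ (c + 2) :: (c + 1) :: Ys := by
  refine ⟨X.mapIdx fun k a => X.length + Y.length + 1 - k + a,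
    Y.mapIdx fun k a => Y.length - 1 - k + a, Y.length + m, List.length_mapIdx, ?_, ?_⟩ <;>
  · simp only [svals, List.mapIdx_append, List.mapIdx_cons, List.length_append, List.length_cons]
    refine congrArg₂ (· ++ ·) rfl
      (congrArg₂ List.cons (by omega) (congrArg₂ List.cons (by omega) ?_))
    exact congrArg (List.mapIdx · Y) (by funext k a; omega)

theorem exists_svals_eq_append_cons_cons {μ : List ℕ} {i : ℕ} (hi : i + 1 < μ.length)
    (heq : μ.getD i 0 = μ.getD (i + 1) 0) :
    ∃ Xs Ys c, Xs.length = i ∧ svals μ = Xs ++ (c + 1) :: c :: Ys ∧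
      svals ((μ.set i (μ.getD i 0 + 1)).set (i + 1) (μ.getD (i + 1) 0 + 1)) =
        Xs ++ (c + 2) :: (c + 1) :: Ys := by
  have hμ := List.eq_take_append_getD_cons_getD_cons hi 0
  rw [← heq] at hμ ⊢
  obtain ⟨X, Y, m, rfl, rfl⟩ : ∃ X Y m, X.length = i ∧ μ = X ++ m :: m :: Y :=
    ⟨_, _, _, List.length_take_of_le (by omega), hμ⟩
  obtain ⟨Xs, Ys, c, hXs, hS, hS'⟩ := exists_svals_append_cons_cons X Y m
  exact ⟨Xs, Ys, c, hXs, hS, by simpa using hS'⟩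

def parityVals (r : ℕ) (S : List ℕ) : List ℕ :=
  (S.filter (fun x => decide (x % 2 = r))).reverse

def symbolRow (r : ℕ) (S : List ℕ) : List ℕ :=
  (parityVals r S).mapIdx (fun i v => (v - r) / 2 - i)

theorem oddVals_eq_parityVals (μ : List ℕ) : oddVals μ = parityVals 1 (svals μ) := rfl
theorem evenVals_eq_parityVals (μ : List ℕ) : evenVals μ = parityVals 0 (svals μ) := rfl
theorem topRow_eq_symbolRow (μ : List ℕ) : topRow μ = symbolRow 1 (svals μ) := rfl
theorem botRow_eq_symbolRow (μ : List ℕ) : botRow μ = symbolRow 0 (svals μ) := rfl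

section Parity

variable {r : ℕ}

@[simp] theorem parityVals_append (S T : List ℕ) :
    parityVals r (S ++ T) = parityVals r T ++ parityVals r S := by
  simp [parityVals]

@[simp] theorem parityVals_cons_of_mod_eq {x : ℕ} (S : List ℕ) (hx : x % 2 = r) :
    parityVals r (x :: S) = parityVals r S ++ [x] := by
  simp [parityVals, hx]

@[simp] theorem parityVals_cons_of_mod_ne {x : ℕ} (S : List ℕ) (hx : x % 2 ≠ r) :
    parityVals r (x :: S) = parityVals r S := by
  simp [parityVals, hx]

theorem two_mul_length_parityVals_le {c : ℕ} {Y : List ℕ} (hY : (c :: Y).Pairwise (· > ·))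
    (hc : c % 2 = r) : 2 * (parityVals r Y).length ≤ c := by
  have hsub : (c :: Y.filter (fun x => decide (x % 2 = r))).Pairwise (· > ·) :=
    hY.sublist (List.filter_sublist.cons_cons c)
  simpa [parityVals] using
    two_mul_length_le_of_pairwise_gt hsub (fun x hx => by
      rw [List.mem_filter, decide_eq_true_eq] at hx; omega)

theorem symbolRow_append_cons_cons_of_mod_ne (X Y : List ℕ) {c : ℕ} (hc : c % 2 ≠ r) :
    symbolRow r (X ++ (c + 2) :: (c + 1) :: Y) = symbolRow r (X ++ (c + 1) :: c :: Y) := by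
  have hc2 : (c + 2) % 2 ≠ r := by omega
  by_cases hc1 : (c + 1) % 2 = r <;> simp [symbolRow, *]

theorem symbolRow_append_cons_cons_of_mod_eq (X Y : List ℕ) {c : ℕ}
    (hY : (c :: Y).Pairwise (· > ·)) (hc : c % 2 = r) :
    symbolRow r (X ++ (c + 2) :: (c + 1) :: Y) =
      (symbolRow r (X ++ (c + 1) :: c :: Y)).set ((parityVals r (X ++ (c + 1) :: c :: Y)).idxOf c)
        ((symbolRow r (X ++ (c + 1) :: c :: Y)).getD
          ((parityVals r (X ++ (c + 1) :: c :: Y)).idxOf c) 0 + 1) := by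
  have hc1 : (c + 1) % 2 ≠ r := by omega
  have hc2 : (c + 2) % 2 = r := by omega
  have hcY : c ∉ parityVals r Y := by
    intro h
    have := List.rel_of_pairwise_cons hY (List.mem_of_mem_filter (List.mem_reverse.1 h))
    omega
  have hbound := two_mul_length_parityVals_le hY hc
  simp only [symbolRow, parityVals_append, parityVals_cons_of_mod_eq _ hc,
    parityVals_cons_of_mod_eq _ hc2, parityVals_cons_of_mod_ne _ hc1, List.append_assoc,
    List.singleton_append, List.idxOf_append_of_notMem hcY, List.idxOf_cons_self, add_zero]
  rw [List.mapIdx_append_cons_eq_set _ _ _ c]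
  congr 1
  rw [List.getD_eq_getElem _ _ (by simp), List.getElem_mapIdx,
    List.getElem_append_right le_rfl]
  simp only [Nat.sub_self, List.getElem_cons_zero]
  omega

end Parity

theorem ruleB_general (μ : List ℕ) (hsort : μ.Pairwise (· ≥ ·)) (i : ℕ)
    (hi : i + 1 < μ.length)
    (heq : μ.getD i 0 = μ.getD (i + 1) 0) :
    ∀ μ' : List ℕ,
      μ' = (μ.set i (μ.getD i 0 + 1)).set (i + 1) (μ.getD (i + 1) 0 + 1) →
    (svals μ).getD (i + 1) 0 = (svals μ).getD i 0 - 1 ∧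
    (((svals μ).getD i 0) % 2 = 0 →
      ((svals μ).getD (i + 1) 0) % 2 = 1 ∧
      botRow μ' = botRow μ ∧
      topRow μ' = (topRow μ).set ((oddVals μ).idxOf ((svals μ).getD (i + 1) 0))
        ((topRow μ).getD ((oddVals μ).idxOf ((svals μ).getD (i + 1) 0)) 0 + 1)) ∧
    (((svals μ).getD i 0) % 2 = 1 →
      ((svals μ).getD (i + 1) 0) % 2 = 0 ∧
      topRow μ' = topRow μ ∧
      botRow μ' = (botRow μ).set ((evenVals μ).idxOf ((svals μ).getD (i + 1) 0))
        ((botRow μ).getD ((evenVals μ).idxOf ((svals μ).getD (i + 1) 0)) 0 + 1)) := by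
  rintro μ' rfl
  obtain ⟨X, Y, c, hX, hS, hS'⟩ := exists_svals_eq_append_cons_cons hi heq
  have hY : (c :: Y).Pairwise (· > ·) :=
    (List.pairwise_append.1 (hS ▸ pairwise_gt_svals hsort)).2.1.of_cons
  have hSi : (svals μ).getD i 0 = c + 1 := by simp [hS, ← hX]
  have hSi1 : (svals μ).getD (i + 1) 0 = c := by simp [hS, ← hX]
  rw [hSi, hSi1]
  simp only [topRow_eq_symbolRow, botRow_eq_symbolRow, oddVals_eq_parityVals,
    evenVals_eq_parityVals, hS, hS']
  refine ⟨rfl, fun h => ⟨by omega, ?_, ?_⟩, fun h => ⟨by omega, ?_, ?_⟩⟩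
  · exact symbolRow_append_cons_cons_of_mod_ne X Y (by omega)
  · exact symbolRow_append_cons_cons_of_mod_eq X Y hY (by omega)
  · exact symbolRow_append_cons_cons_of_mod_ne X Y (by omega)
  · exact symbolRow_append_cons_cons_of_mod_eq X Y hY (by omega)

/-- **Rule B.** Let `μ` be a weakly decreasing sequence of nonnegative
integers and `i` a (0-based) index with `i + 1 < l`, `μ_i = μ_{i+1}`, and
(`i` first or `μ_{i-1} ≥ μ_i + 1`).  Let `μ'` be `μ` with `1` added to both
`μ_i` and `μ_{i+1}`.  Then `s_{i+1} = s_i - 1`.  If `s_i` is even, then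
`s_{i+1}` is odd, say the `j`-th smallest odd value of `s`; the bottom row of
the symbol is unchanged and the `j`-th entry of the top row increases by one,
all other entries unchanged.  If `s_i` is odd, then `s_{i+1}` is the `j`-th
smallest even value of `s`; the top row is unchanged and the `j`-th entry of
the bottom row increases by one. -/
theorem ruleB (μ : List ℕ) (hsort : μ.Pairwise (· ≥ ·)) (i : ℕ)
    (hi : i + 1 < μ.length)
    (heq : μ.getD i 0 = μ.getD (i + 1) 0)
    (hsep : i = 0 ∨ μ.getD (i - 1) 0 ≥ μ.getD i 0 + 1) :
    ∀ μ' : List ℕ,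
      μ' = (μ.set i (μ.getD i 0 + 1)).set (i + 1) (μ.getD (i + 1) 0 + 1) →
    (svals μ).getD (i + 1) 0 = (svals μ).getD i 0 - 1 ∧
    (((svals μ).getD i 0) % 2 = 0 →
      ((svals μ).getD (i + 1) 0) % 2 = 1 ∧
      botRow μ' = botRow μ ∧
      topRow μ' = (topRow μ).set ((oddVals μ).idxOf ((svals μ).getD (i + 1) 0))
        ((topRow μ).getD ((oddVals μ).idxOf ((svals μ).getD (i + 1) 0)) 0 + 1)) ∧
    (((svals μ).getD i 0) % 2 = 1 →
      ((svals μ).getD (i + 1) 0) % 2 = 0 ∧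
      topRow μ' = topRow μ ∧
      botRow μ' = (botRow μ).set ((evenVals μ).idxOf ((svals μ).getD (i + 1) 0))
        ((botRow μ).getD ((evenVals μ).idxOf ((svals μ).getD (i + 1) 0)) 0 + 1)) :=
  ruleB_general μ hsort i hi heq
end

section
/- (Extended Rule B) Let μ = (μ_1 ≥ … ≥ μ_l) be a weakly decreasing sequence of nonnegative integers and let i ≥ 1, m ≥ 1 with i + 2m − 1 ≤ l and μ_i = μ_{i+1} = … = μ_{i+2m−1}. Let μ' be obtained from μ by adding 1 to each of these 2m parts, and set s_k = l − k + μ_k and s'_k = l − k + μ'_k. Then the multiset {s'_1, …, s'_l} is obtained from the multiset {s_1, …, s_l} by removing the m values s_i − 1, s_i − 3, …, s_i − 2m + 1 and inserting the m values s_i + 1, s_i − 1, …, s_i − 2m + 3 (i.e., each removed value is replaced by that value plus 2). In particular, if s_i is odd then the multiset of odd values of s' equals the multiset of odd values of s, and the m even values s_i − 1, …, s_i − 2m + 1 each increase by 2; if s_i is even then the multiset of even values is unchanged and the m odd values s_i − 1, …, s_i − 2m + 1 each increase by 2. -/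
/-!
Inside the block `μ_i = ⋯ = μ_{i+2m-1}` the values are `s_{i+j} = s_i - j` (`j < 2m`), and raising
these parts by one turns them into `s_i + 1 - j`; outside the block nothing changes. Splitting both
runs of `2m` consecutive integers by the parity of `j`, the values `s_i - 2t` occur in both, so the
net change replaces each `s_i - (2t + 1)` by `s_i + 1 - 2t`. All of these have the parity opposite
to that of `s_i`, so the values of the parity of `s_i` are untouched.
-/

namespace Multiset

theorem map_range_two_mul {α : Type*} (f : ℕ → α) (m : ℕ) :
    (range (2 * m)).map f =
      (range m).map (fun t => f (2 * t)) + (range m).map (fun t => f (2 * t + 1)) := by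
  induction m with
  | zero => simp
  | succ m ih =>
    rw [show 2 * (m + 1) = 2 * m + 1 + 1 by ring]
    simp only [range_succ, map_cons, ih, cons_add, add_cons]

theorem exists_map_range_eq_add_and_eq_add {α : Type*} {f g : ℕ → α} {n i k : ℕ}
    (h : i + k ≤ n) (hfg : ∀ j < n, (j < i ∨ i + k ≤ j) → f j = g j) :
    ∃ T, (range n).map f = T + (range k).map (fun j => f (i + j)) ∧
      (range n).map g = T + (range k).map (fun j => g (i + j)) := by
  obtain ⟨r, rfl⟩ := Nat.exists_eq_add_of_le h
  have hlow : (range i).map g = (range i).map f :=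
    map_congr rfl fun j hj => (hfg j (by simp at hj; omega) (.inl (by simpa using hj))).symm
  have hhigh : (range r).map (fun j => g (i + k + j)) = (range r).map (fun j => f (i + k + j)) :=
    map_congr rfl fun j hj => (hfg _ (by simp at hj; omega) (.inr (by omega))).symm
  refine ⟨(range i).map f + (range r).map (fun j => f (i + k + j)), ?_, ?_⟩ <;>
    rw [range_add, range_add, map_add, map_add, map_map, map_map] <;>
    simp only [Function.comp_def, hlow, hhigh] <;> abel

theorem filter_sub_add_eq_of_forall_not {α : Type*} [DecidableEq α] {p : α → Prop}
    [DecidablePred p] (s : Multiset α) {t u : Multiset α} (ht : ∀ x ∈ t, ¬p x)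
    (hu : ∀ x ∈ u, ¬p x) : (s - t + u).filter p = s.filter p := by
  rw [filter_add, filter_sub, filter_eq_nil.2 ht, filter_eq_nil.2 hu, tsub_zero, add_zero]

end Multiset

theorem List.mapIdx_eq_map_range {α β : Type*} (l : List α) (f : ℕ → α → β) (d : α) :
    l.mapIdx f = (range l.length).map (fun k => f k (l.getD k d)) :=
  ext_getElem (by simp) fun k h₁ _ => by
    rw [getElem_mapIdx, getElem_map, getElem_range, getD_eq_getElem _ _ (by simpa using h₁)]

theorem svals_eq_map_range (μ : List ℕ) :
    svals μ = (List.range μ.length).map fun k => μ.length - 1 - k + μ.getD k 0 :=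
  List.mapIdx_eq_map_range _ _ _

theorem coe_svals_mapIdx (μ : List ℕ) (g : ℕ → ℕ → ℕ) :
    (svals (μ.mapIdx g) : Multiset ℕ) =
      (Multiset.range μ.length).map fun k => μ.length - 1 - k + g k (μ.getD k 0) := by
  rw [svals, List.mapIdx_mapIdx, List.length_mapIdx, List.mapIdx_eq_map_range _ _ 0,
    ← Multiset.map_coe, Multiset.coe_range]
  rfl

theorem getD_svals (μ : List ℕ) {k : ℕ} (hk : k < μ.length) :
    (svals μ).getD k 0 = μ.length - 1 - k + μ.getD k 0 := by
  rw [svals_eq_map_range, List.getD_eq_getElem _ _ (by simpa using hk), List.getElem_map,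
    List.getElem_range]

theorem le_getD_svals_of_add_lt (μ : List ℕ) {i j : ℕ} (h : i + j < μ.length) :
    j ≤ (svals μ).getD i 0 := by
  rw [getD_svals μ (by omega)]
  omega

theorem coe_svals_mapIdx_succ_block (μ : List ℕ) {i m : ℕ} (hle : i + 2 * m ≤ μ.length)
    (heq : ∀ k, i ≤ k → k < i + 2 * m → μ.getD k 0 = μ.getD i 0) :
    (svals (μ.mapIdx fun k a => if i ≤ k ∧ k < i + 2 * m then a + 1 else a) : Multiset ℕ) =
      (svals μ : Multiset ℕ)
        - (((List.range m).map fun t => (svals μ).getD i 0 - (2 * t + 1)) : Multiset ℕ)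
        + (((List.range m).map fun t => (svals μ).getD i 0 + 1 - 2 * t) : Multiset ℕ) := by
  set l := μ.length
  set c := (svals μ).getD i 0
  obtain ⟨T, hT, hT'⟩ := Multiset.exists_map_range_eq_add_and_eq_add
    (f := fun k => l - 1 - k + μ.getD k 0)
    (g := fun k => l - 1 - k + if i ≤ k ∧ k < i + 2 * m then μ.getD k 0 + 1 else μ.getD k 0)
    hle fun k _ hk => by rw [if_neg (by omega)]
  have hval : ∀ j < 2 * m, l - 1 - (i + j) + μ.getD (i + j) 0 + j = c := fun j hj => by
    have hc : c = l - 1 - i + μ.getD i 0 := getD_svals μ (by omega)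
    rw [heq (i + j) (by omega) (by omega)]
    omega
  have hblock : (Multiset.range (2 * m)).map (fun j => l - 1 - (i + j) + μ.getD (i + j) 0) =
      (Multiset.range (2 * m)).map (fun j => c - j) :=
    Multiset.map_congr rfl fun j hj => by
      have := hval j (Multiset.mem_range.1 hj)
      omega
  have hblock' : (Multiset.range (2 * m)).map (fun j => l - 1 - (i + j) +
      if i ≤ i + j ∧ i + j < i + 2 * m then μ.getD (i + j) 0 + 1 else μ.getD (i + j) 0) =
      (Multiset.range (2 * m)).map (fun j => c + 1 - j) :=
    Multiset.map_congr rfl fun j hj => by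
      have := hval j (Multiset.mem_range.1 hj)
      rw [if_pos (by simp at hj; omega)]
      omega
  have hshift : (fun t => c + 1 - (2 * t + 1)) = fun t => c - 2 * t := by
    funext t
    omega
  rw [coe_svals_mapIdx, svals_eq_map_range, ← Multiset.map_coe, Multiset.coe_range, hT, hT',
    hblock, hblock', Multiset.map_range_two_mul, Multiset.map_range_two_mul, hshift,
    ← Multiset.map_coe, ← Multiset.map_coe, Multiset.coe_range]
  simp only [← add_assoc, add_tsub_cancel_right]
  abel

theorem extendedRuleB_general (μ : List ℕ) (i m : ℕ)
    (hle : i + 2 * m ≤ μ.length)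
    (heq : ∀ k, i ≤ k → k < i + 2 * m → μ.getD k 0 = μ.getD i 0) :
    ∀ μ' : List ℕ,
      μ' = μ.mapIdx (fun k a => if i ≤ k ∧ k < i + 2 * m then a + 1 else a) →
    ((svals μ' : Multiset ℕ) =
      (svals μ : Multiset ℕ)
        - (((List.range m).map (fun t => (svals μ).getD i 0 - (2 * t + 1))) : Multiset ℕ)
        + (((List.range m).map (fun t => (svals μ).getD i 0 + 1 - 2 * t)) : Multiset ℕ)) ∧
    (((svals μ).getD i 0) % 2 = 1 →
      (((svals μ').filter (fun x => decide (x % 2 = 1))) : Multiset ℕ)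
        = (((svals μ).filter (fun x => decide (x % 2 = 1))) : Multiset ℕ)) ∧
    (((svals μ).getD i 0) % 2 = 0 →
      (((svals μ').filter (fun x => decide (x % 2 = 0))) : Multiset ℕ)
        = (((svals μ).filter (fun x => decide (x % 2 = 0))) : Multiset ℕ)) := by
  rintro μ' rfl
  have hsvals := coe_svals_mapIdx_succ_block μ hle heq
  refine ⟨hsvals, fun hodd => ?_, fun heven => ?_⟩ <;>
    rw [← Multiset.filter_coe, ← Multiset.filter_coe, hsvals] <;>
    refine Multiset.filter_sub_add_eq_of_forall_not _ ?_ ?_ <;>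
    simp only [Multiset.mem_coe, List.mem_map, List.mem_range] <;>
    rintro _ ⟨t, ht, rfl⟩ <;>
    have := le_getD_svals_of_add_lt μ (i := i) (j := 2 * t + 1) (by omega) <;> omega

/-- **Extended Rule B.** Let `μ` be weakly decreasing with `2m` equal
consecutive parts `μ_i = … = μ_{i+2m-1}` (0-based indices, `i + 2m ≤ l`),
and let `μ'` add `1` to each of these parts.  Then the multiset of values
`s'_k` is obtained from the multiset of values `s_k` by removing the `m`
values `s_i - 1, s_i - 3, …, s_i - 2m + 1` and inserting the `m` values
`s_i + 1, s_i - 1, …, s_i - 2m + 3` (each removed value is replaced by that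
value plus 2).  In particular, if `s_i` is odd the multiset of odd values is
unchanged, and if `s_i` is even the multiset of even values is unchanged. -/
theorem extendedRuleB (μ : List ℕ) (hsort : μ.Pairwise (· ≥ ·)) (i m : ℕ)
    (hm : 1 ≤ m) (hle : i + 2 * m ≤ μ.length)
    (heq : ∀ k, i ≤ k → k < i + 2 * m → μ.getD k 0 = μ.getD i 0) :
    ∀ μ' : List ℕ,
      μ' = μ.mapIdx (fun k a => if i ≤ k ∧ k < i + 2 * m then a + 1 else a) →
    ((svals μ' : Multiset ℕ) =
      (svals μ : Multiset ℕ)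
        - (((List.range m).map (fun t => (svals μ).getD i 0 - (2 * t + 1))) : Multiset ℕ)
        + (((List.range m).map (fun t => (svals μ).getD i 0 + 1 - 2 * t)) : Multiset ℕ)) ∧
    (((svals μ).getD i 0) % 2 = 1 →
      (((svals μ').filter (fun x => decide (x % 2 = 1))) : Multiset ℕ)
        = (((svals μ).filter (fun x => decide (x % 2 = 1))) : Multiset ℕ)) ∧
    (((svals μ).getD i 0) % 2 = 0 →
      (((svals μ').filter (fun x => decide (x % 2 = 0))) : Multiset ℕ)
        = (((svals μ).filter (fun x => decide (x % 2 = 0))) : Multiset ℕ)) :=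
  extendedRuleB_general μ i m hle heq
end

section
/- (Closed formula, B_n) Let λ be a rigid B_n partition with length l, so l is odd; let M = (l+1)/2, and let (α_1, …, α_M; β_1, …, β_{M−1}) be the symbol of λ in the B_n theory. Then for every 1 ≤ p ≤ M: α_{M+1−p} = #{ i : 1 ≤ i ≤ λ_1, and either (λ^T_i is odd, i is even, and (λ^T_i + 1)/2 ≥ p) or (λ^T_i is even, i is odd, and λ^T_i/2 ≥ p) }; and for every 1 ≤ p ≤ M−1: β_{M−p} = #{ i : 1 ≤ i ≤ λ_1, and either (λ^T_i is even, i is even, and λ^T_i/2 ≥ p) or (λ^T_i is odd, i is odd, and (λ^T_i − 1)/2 ≥ p) }. -/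
/-- The row `λ^T_i` of the transposed Young diagram: the number of parts
of `lam` that are `≥ i`. -/
def transposeRow (lam : List ℕ) (i : ℕ) : ℕ :=
  lam.countP (fun a => decide (i ≤ a))

/-!
The numbers `s_k` form a β-set of `λ`; below `l + λ_1` its complement consists of the gaps
`(l - 1) + i - λ^T_i`, `1 ≤ i ≤ λ_1`. For a parity `r ∈ {0, 1}` let `V` be the `p`-th largest
element of parity `r` of the β-set. The symbol entry `(V - r)/2 - (#{beads of parity r} - p)`
then counts the gaps of parity `r` below `V`. A gap `(l - 1) + i - λ^T_i` lies below `V` iff at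
least `p` beads of parity `r` exceed it; these beads are the `s_k` with `k < λ^T_i`, and as equal
parts occupy consecutive indices and even parts occur an even number of times, exactly
`(λ^T_i + r)/2` of them have parity `r`. The parity of the gap is that of `i + λ^T_i`.
-/

open Finset

namespace List

theorem le_getElem_iff_lt_countP {α : Type*} [LinearOrder α] {L : List α}
    (hL : L.Pairwise (· ≥ ·)) {k : ℕ} (hk : k < L.length) (x : α) :
    x ≤ L[k] ↔ k < L.countP (fun y => x ≤ y) := by
  induction L generalizing k with
  | nil => simp at hk
  | cons a t ih =>
    obtain ⟨ha, ht⟩ := pairwise_cons.mp hL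
    rw [countP_cons]
    cases k with
    | zero =>
      by_cases hxa : x ≤ a
      · simp [hxa]
      · have hnone : t.countP (fun y => x ≤ y) = 0 :=
          countP_eq_zero.mpr fun b hb => by simpa using fun hxb => hxa (le_trans hxb (ha b hb))
        simp [hxa, hnone]
    | succ k =>
      have hk' : k < t.length := by simpa using hk
      rw [getElem_cons_succ, ih ht hk']
      by_cases hxa : x ≤ a
      · simp [hxa]
      · have hxt : ¬ x ≤ t[k] := fun h => hxa (h.trans (ha _ (getElem_mem hk')))
        rw [ih ht hk'] at hxt
        simp [hxa]
        omega

theorem countP_getElem_le_eq {α : Type*} [LinearOrder α] {L : List α}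
    (hL : L.Pairwise (· > ·)) {k : ℕ} (hk : k < L.length) :
    L.countP (fun y => L[k] ≤ y) = k + 1 := by
  have hL' : L.Pairwise (· ≥ ·) := hL.imp le_of_lt
  have hge := (le_getElem_iff_lt_countP hL' hk L[k]).mp le_rfl
  by_contra hne
  have hk1 : k + 1 < L.length := by
    have := L.countP_le_length (p := fun y => L[k] ≤ y)
    omega
  have hle := (le_getElem_iff_lt_countP hL' hk1 L[k]).mpr (by omega)
  exact (pairwise_iff_getElem.mp hL k (k + 1) hk hk1 (by omega)).not_ge hle

theorem antitone_getD_of_pairwise {L : List ℕ} (hL : L.Pairwise (· ≥ ·)) :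
    Antitone (L.getD · 0) := by
  intro j k hjk
  show L.getD k 0 ≤ L.getD j 0
  rcases lt_or_ge k L.length with hk | hk
  · rcases hjk.eq_or_lt with rfl | hjk
    · rfl
    rw [getD_eq_getElem _ _ hk, getD_eq_getElem _ _ (hjk.trans hk)]
    exact pairwise_iff_getElem.mp hL j k _ hk hjk
  · simp [getD_eq_getElem?_getD, getElem?_eq_none hk]

theorem mem_iff_exists_getD {α : Type*} {L : List α} {y : α} (d : α) :
    y ∈ L ↔ ∃ k < L.length, L.getD k d = y := by
  rw [mem_iff_getElem?]
  refine exists_congr fun k => ⟨fun h => ?_, fun ⟨hk, h⟩ => ?_⟩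
  · exact ⟨(getElem?_eq_some_iff.mp h).1, by simp [getD_eq_getElem?_getD, h]⟩
  · rw [getD_eq_getElem _ _ hk] at h
    exact getElem?_eq_some_iff.mpr ⟨hk, h⟩

theorem countP_eq_card_filter_range (L : List ℕ) (q : ℕ → Bool) :
    L.countP q = #{k ∈ Finset.range L.length | q (L.getD k 0)} := by
  induction L with
  | nil => simp
  | cons a t ih =>
    rw [countP_cons, length_cons, card_filter, Finset.sum_range_succ', ih, card_filter]
    simp

theorem card_filter_range_mem {L : List ℕ} (hL : L.Nodup) (m : ℕ) :
    #{y ∈ Finset.range m | y ∈ L} = L.countP (· < m) := by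
  rw [countP_eq_length_filter, ← toFinset_card_of_nodup (hL.filter _)]
  congr 1
  ext y
  simp [and_comm]

theorem even_countP_even {L : List ℕ} (hL : ∀ m : ℕ, Even m → Even (L.count m)) :
    Even (L.countP (fun a => a % 2 = 0)) := by
  classical
  rw [countP_eq_length_filter, ← sum_toFinset_count_eq_length]
  refine Finset.even_sum _ fun a ha => ?_
  have hae : a % 2 = 0 := by simpa using (mem_filter.mp (mem_toFinset.mp ha)).2
  rw [count_filter (by simpa using hae)]
  exact hL a (Nat.even_iff.mpr hae)

theorem sum_add_length_add_countP_even_mod_two (L : List ℕ) :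
    (L.sum + L.length + L.countP (fun a => a % 2 = 0)) % 2 = 0 := by
  induction L with
  | nil => simp
  | cons a t ih =>
    simp only [sum_cons, length_cons, countP_cons]
    split_ifs with h <;> simp only [decide_eq_true_eq] at h <;> omega

theorem odd_length_of_odd_sum {L : List ℕ} (hL : ∀ m : ℕ, Even m → Even (L.count m))
    (hsum : Odd L.sum) : Odd L.length := by
  have h1 := L.sum_add_length_add_countP_even_mod_two
  have h2 := Nat.even_iff.mp (even_countP_even hL)
  rw [Nat.odd_iff] at hsum ⊢
  omega

end List

theorem Nat.card_filter_Ico_mod_two (a b : ℕ) {c : ℕ} (hc : c ≤ 1) :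
    #{k ∈ Ico a b | k % 2 = c} = (b + 1 - c) / 2 - (a + 1 - c) / 2 := by
  induction b with
  | zero => simp; omega
  | succ b ih =>
    rcases le_or_gt a b with hab | hab
    · rw [Nat.Ico_succ_right_eq_insert_Ico hab, filter_insert]
      split_ifs with hb
      · rw [card_insert_of_notMem (by simp)]
        omega
      · omega
    · rw [Ico_eq_empty (by omega)]
      simp
      omega

section transposeRow

variable {lam : List ℕ}

theorem transposeRow_le_length (lam : List ℕ) (i : ℕ) : transposeRow lam i ≤ lam.length :=
  List.countP_le_length

theorem transposeRow_antitone (lam : List ℕ) : Antitone (transposeRow lam) :=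
  fun _ _ hij => List.countP_mono_left fun _ _ h => by simp at h ⊢; omega

theorem transposeRow_zero (lam : List ℕ) : transposeRow lam 0 = lam.length := by
  simp [transposeRow]

theorem transposeRow_eq_zero {i : ℕ} (h : ∀ a ∈ lam, a < i) : transposeRow lam i = 0 :=
  List.countP_eq_zero.mpr fun a ha => by simpa using h a ha

theorem transposeRow_eq_add_count (lam : List ℕ) (i : ℕ) :
    transposeRow lam i = transposeRow lam (i + 1) + lam.count i := by
  induction lam with
  | nil => simp [transposeRow]
  | cons a t ih =>
    simp only [transposeRow, List.countP_cons, List.count_cons] at ih ⊢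
    rw [ih]
    split_ifs <;> simp_all <;> omega

theorem le_getD_iff_lt_transposeRow (hsort : lam.Pairwise (· ≥ ·)) {k : ℕ}
    (hk : k < lam.length) (i : ℕ) : i ≤ lam.getD k 0 ↔ k < transposeRow lam i := by
  rw [List.getD_eq_getElem _ _ hk]
  exact List.le_getElem_iff_lt_countP hsort hk i

theorem getD_eq_of_mem_Ico_transposeRow (hsort : lam.Pairwise (· ≥ ·)) {i k : ℕ}
    (hk : k ∈ Ico (transposeRow lam (i + 1)) (transposeRow lam i)) : lam.getD k 0 = i := by
  rw [mem_Ico] at hk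
  have hkl : k < lam.length := hk.2.trans_le (transposeRow_le_length lam i)
  have h1 := (le_getD_iff_lt_transposeRow hsort hkl i).mpr hk.2
  have h2 := (le_getD_iff_lt_transposeRow hsort hkl (i + 1)).not.mpr (by omega)
  omega

theorem card_filter_range_transposeRow (hsort : lam.Pairwise (· ≥ ·))
    (hBn : ∀ m : ℕ, Even m → Even (lam.count m)) {r : ℕ} (hr : r ≤ 1) (i : ℕ) :
    #{k ∈ range (transposeRow lam i) | (k + lam.getD k 0) % 2 = r} =
      (transposeRow lam i + r) / 2 := by
  suffices h : ∀ j i, (∀ a ∈ lam, a < i + j) → #{k ∈ range (transposeRow lam i) |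
      (k + lam.getD k 0) % 2 = r} = (transposeRow lam i + r) / 2 from
    h (lam.sum + 1) i fun a ha => by have := List.le_sum_of_mem ha; omega
  intro j
  induction j with
  | zero => intro i hi; simp [transposeRow_eq_zero (i := i) (by simpa using hi)]; omega
  | succ j ih =>
    intro i hi
    have hnext := ih (i + 1) fun a ha => by have := hi a ha; omega
    have hle := transposeRow_antitone lam (Nat.le_succ i)
    have hcount := transposeRow_eq_add_count lam i
    have heven : i % 2 = 0 → lam.count i % 2 = 0 := fun h =>
      Nat.even_iff.mp (hBn i (Nat.even_iff.mpr h))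
    have hblock : #{k ∈ Ico (transposeRow lam (i + 1)) (transposeRow lam i) |
        (k + lam.getD k 0) % 2 = r} = #{k ∈ Ico (transposeRow lam (i + 1))
          (transposeRow lam i) | k % 2 = (r + i) % 2} :=
      congrArg card <| filter_congr fun k hk => by
        rw [getD_eq_of_mem_Ico_transposeRow hsort hk]; omega
    rw [card_filter, ← sum_range_add_sum_Ico _ hle, ← card_filter, ← card_filter, hnext,
      hblock, Nat.card_filter_Ico_mod_two _ _ (by omega)]
    omega

end transposeRow

section svals

variable {lam : List ℕ}

theorem svals_length (lam : List ℕ) : (svals lam).length = lam.length := by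
  simp [svals]

theorem svals_getD (lam : List ℕ) (k : ℕ) :
    (svals lam).getD k 0 = lam.length - 1 - k + lam.getD k 0 := by
  simp only [svals, List.getD_eq_getElem?_getD, List.getElem?_mapIdx]
  cases h : lam[k]? with
  | none => simp only [Option.map_none, Option.getD_none]; simp at h; omega
  | some a => simp

theorem mem_svals_iff {y : ℕ} : y ∈ svals lam ↔ ∃ k < lam.length, (svals lam).getD k 0 = y := by
  rw [List.mem_iff_exists_getD 0, svals_length]

theorem svals_pairwise_gt (hsort : lam.Pairwise (· ≥ ·)) : (svals lam).Pairwise (· > ·) := by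
  refine List.pairwise_iff_getElem.mpr fun j k hj hk hjk => ?_
  rw [← List.getD_eq_getElem _ 0, ← List.getD_eq_getElem _ 0, svals_getD, svals_getD]
  have : lam.getD k 0 ≤ lam.getD j 0 := List.antitone_getD_of_pairwise hsort hjk.le
  rw [svals_length] at hk
  omega

theorem svals_getD_mod_two (hodd : Odd lam.length) (k : ℕ) (hk : k < lam.length) :
    (svals lam).getD k 0 % 2 = (k + lam.getD k 0) % 2 := by
  rw [svals_getD]
  obtain ⟨m, hm⟩ := hodd
  omega

/-- For `1 ≤ i ≤ λ_1` these are the numbers below `l + λ_1` missing from `svals lam`. -/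
def svalsGap (lam : List ℕ) (i : ℕ) : ℕ :=
  lam.length + i - 1 - transposeRow lam i

theorem svalsGap_strictMonoOn (lam : List ℕ) : StrictMonoOn (svalsGap lam) (Set.Ici 1) := by
  intro i hi j _ hij
  have := transposeRow_antitone lam hij.le
  have := transposeRow_le_length lam i
  simp only [svalsGap, Set.mem_Ici] at hi ⊢
  omega

theorem svalsGap_mod_two (hodd : Odd lam.length) {i : ℕ} (hi : 1 ≤ i) :
    svalsGap lam i % 2 = (i + transposeRow lam i) % 2 := by
  have := transposeRow_le_length lam i
  obtain ⟨m, hm⟩ := hodd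
  unfold svalsGap
  omega

theorem svalsGap_lt_svals_getD_iff (hsort : lam.Pairwise (· ≥ ·)) {i k : ℕ} (hi : 1 ≤ i)
    (hk : k < lam.length) : svalsGap lam i < (svals lam).getD k 0 ↔ k < transposeRow lam i := by
  have := le_getD_iff_lt_transposeRow hsort hk i
  have := transposeRow_le_length lam i
  rw [svals_getD, svalsGap]
  omega

theorem svals_getD_ne_svalsGap (hsort : lam.Pairwise (· ≥ ·)) {i k : ℕ} (hi : 1 ≤ i)
    (hk : k < lam.length) : (svals lam).getD k 0 ≠ svalsGap lam i := by
  have := le_getD_iff_lt_transposeRow hsort hk i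
  have := transposeRow_le_length lam i
  rw [svals_getD, svalsGap]
  omega

theorem svals_getD_lt (hsort : lam.Pairwise (· ≥ ·)) {k : ℕ} (hk : k < lam.length) :
    (svals lam).getD k 0 < lam.length + lam.getD 0 0 := by
  have : lam.getD k 0 ≤ lam.getD 0 0 := List.antitone_getD_of_pairwise hsort (Nat.zero_le k)
  rw [svals_getD]
  omega

theorem image_svalsGap (hsort : lam.Pairwise (· ≥ ·)) :
    (Icc 1 (lam.getD 0 0)).image (svalsGap lam) =
      range (lam.length + lam.getD 0 0) \ (svals lam).toFinset := by
  have hsub : (Icc 1 (lam.getD 0 0)).image (svalsGap lam) ⊆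
      range (lam.length + lam.getD 0 0) \ (svals lam).toFinset := by
    intro y hy
    obtain ⟨i, hi, rfl⟩ := mem_image.mp hy
    rw [mem_Icc] at hi
    rw [mem_sdiff, mem_range, List.mem_toFinset, mem_svals_iff]
    refine ⟨by unfold svalsGap; omega, fun ⟨k, hk, hki⟩ => ?_⟩
    exact svals_getD_ne_svalsGap hsort hi.1 hk hki
  have hsvals : (svals lam).toFinset ⊆ range (lam.length + lam.getD 0 0) := fun y hy => by
    obtain ⟨k, hk, rfl⟩ := mem_svals_iff.mp (List.mem_toFinset.mp hy)
    exact mem_range.mpr (svals_getD_lt hsort hk)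
  refine eq_of_subset_of_card_le hsub ?_
  rw [card_image_of_injOn ((svalsGap_strictMonoOn lam).injOn.mono fun i hi =>
      (mem_Icc.mp hi).1), card_sdiff_of_subset hsvals, card_range,
    List.toFinset_card_of_nodup (svals_pairwise_gt hsort).nodup, svals_length, Nat.card_Icc]
  omega

end svals

section parity

variable {lam : List ℕ}

theorem countP_svals_mod_two_and_eq_card (hodd : Odd lam.length) (r : ℕ) {q : ℕ → Prop}
    [DecidablePred q] {t : ℕ} (ht : t ≤ lam.length)
    (hq : ∀ k < lam.length, q ((svals lam).getD k 0) ↔ k < t) :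
    (svals lam).countP (fun s => s % 2 = r ∧ q s) =
      #{k ∈ range t | (k + lam.getD k 0) % 2 = r} := by
  rw [List.countP_eq_card_filter_range, svals_length]
  congr 1
  ext k
  simp only [mem_filter, mem_range, decide_eq_true_eq]
  constructor
  · rintro ⟨hk, hkr, hqk⟩
    exact ⟨(hq k hk).mp hqk, by rwa [← svals_getD_mod_two hodd k hk]⟩
  · rintro ⟨hkt, hkr⟩
    have hk := hkt.trans_le ht
    exact ⟨hk, by rwa [svals_getD_mod_two hodd k hk], (hq k hk).mpr hkt⟩

theorem length_filter_svals_mod_two (hsort : lam.Pairwise (· ≥ ·)) (hodd : Odd lam.length)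
    (hBn : ∀ m : ℕ, Even m → Even (lam.count m)) {r : ℕ} (hr : r ≤ 1) :
    ((svals lam).filter (· % 2 = r)).length = (lam.length + r) / 2 := by
  have h := countP_svals_mod_two_and_eq_card hodd r (q := fun _ => True) le_rfl fun k hk => by
    simpa using hk
  rw [← transposeRow_zero lam, ← card_filter_range_transposeRow hsort hBn hr 0,
    transposeRow_zero, ← h, List.countP_eq_length_filter]
  simp

theorem countP_filter_svals_mod_two_gt_svalsGap (hsort : lam.Pairwise (· ≥ ·))
    (hodd : Odd lam.length) (hBn : ∀ m : ℕ, Even m → Even (lam.count m)) {r : ℕ} (hr : r ≤ 1)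
    {i : ℕ} (hi : 1 ≤ i) :
    ((svals lam).filter (· % 2 = r)).countP (svalsGap lam i < ·) =
      (transposeRow lam i + r) / 2 := by
  rw [List.countP_filter, ← card_filter_range_transposeRow hsort hBn hr i,
    ← countP_svals_mod_two_and_eq_card hodd r (transposeRow_le_length lam i)
      fun k hk => svalsGap_lt_svals_getD_iff hsort hi hk]
  exact List.countP_congr fun s _ => by simp [and_comm]

end parity

section symbol

variable {lam : List ℕ}

theorem card_filter_svalsGap_lt (hsort : lam.Pairwise (· ≥ ·)) {r V : ℕ} (hr : r ≤ 1)
    (hV : V ≤ lam.length + lam.getD 0 0) (hVr : V % 2 = r) :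
    #{i ∈ Icc 1 (lam.getD 0 0) | svalsGap lam i % 2 = r ∧ svalsGap lam i < V} =
      (V - r) / 2 - ((svals lam).filter (· % 2 = r)).countP (· < V) := by
  set Lr := (svals lam).filter (· % 2 = r)
  have hinj : Set.InjOn (svalsGap lam) (↑{i ∈ Icc 1 (lam.getD 0 0) |
      svalsGap lam i % 2 = r ∧ svalsGap lam i < V} : Set ℕ) :=
    (svalsGap_strictMonoOn lam).injOn.mono fun i hi =>
      Set.mem_Ici.mpr (mem_Icc.mp (mem_filter.mp hi).1).1
  have hgaps : #{i ∈ Icc 1 (lam.getD 0 0) | svalsGap lam i % 2 = r ∧ svalsGap lam i < V} =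
      #{y ∈ {y ∈ range V | y % 2 = r} | y ∉ Lr} := by
    rw [← card_image_of_injOn hinj, ← filter_image (p := fun y => y % 2 = r ∧ y < V),
      image_svalsGap hsort]
    congr 1
    ext y
    simp only [mem_filter, mem_sdiff, mem_range, List.mem_toFinset, Lr, List.mem_filter,
      decide_eq_true_eq]
    constructor
    · rintro ⟨⟨-, hy⟩, hyr, hyV⟩
      exact ⟨⟨hyV, hyr⟩, fun h => hy h.1⟩
    · rintro ⟨⟨hyV, hyr⟩, hy⟩
      exact ⟨⟨by omega, fun h => hy ⟨h, hyr⟩⟩, hyr, hyV⟩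
  have hbeads : #{y ∈ {y ∈ range V | y % 2 = r} | y ∈ Lr} = Lr.countP (· < V) := by
    rw [← List.card_filter_range_mem ((svals_pairwise_gt hsort).filter _).nodup]
    congr 1
    ext y
    simp only [mem_filter, mem_range, Lr, List.mem_filter, decide_eq_true_eq]
    tauto
  have hparity : #{y ∈ range V | y % 2 = r} = (V - r) / 2 := by
    rw [range_eq_Ico, Nat.card_filter_Ico_mod_two _ _ hr]
    omega
  have hsplit := card_filter_add_card_filter_not (s := {y ∈ range V | y % 2 = r}) (· ∈ Lr)
  omega

theorem symbol_entry_eq_card (hsort : lam.Pairwise (· ≥ ·)) (hodd : Odd lam.length)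
    (hBn : ∀ m : ℕ, Even m → Even (lam.count m)) {r p : ℕ} (hr : r ≤ 1) (hp : 1 ≤ p)
    (hpM : p ≤ (lam.length + r) / 2) :
    (((svals lam).filter (· % 2 = r)).reverse.getD ((lam.length + r) / 2 - p) 0 - r) / 2 -
        ((lam.length + r) / 2 - p) =
      #{i ∈ Icc 1 (lam.getD 0 0) |
        (i + transposeRow lam i) % 2 = r ∧ p ≤ (transposeRow lam i + r) / 2} := by
  set Lr := (svals lam).filter (· % 2 = r)
  have hlen : Lr.length = (lam.length + r) / 2 := length_filter_svals_mod_two hsort hodd hBn hr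
  have hsorted : Lr.Pairwise (· > ·) := (svals_pairwise_gt hsort).filter _
  have hp1 : p - 1 < Lr.length := by omega
  set V := Lr[p - 1] with hV
  have hgetD : Lr.reverse.getD ((lam.length + r) / 2 - p) 0 = V := by
    rw [List.getD_eq_getElem _ _ (by simp only [List.length_reverse]; omega),
      List.getElem_reverse]
    congr 1
    omega
  obtain ⟨hVmem, hVr⟩ : V ∈ svals lam ∧ V % 2 = r := by
    simpa using List.mem_filter.mp (List.getElem_mem hp1)
  have hVle : V ≤ lam.length + lam.getD 0 0 := by
    obtain ⟨k, hk, hkV⟩ := mem_svals_iff.mp hVmem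
    exact hkV ▸ (svals_getD_lt hsort hk).le
  have hbelow : Lr.countP (· < V) = (lam.length + r) / 2 - p := by
    have h := List.length_eq_countP_add_countP (fun y => V ≤ y) (l := Lr)
    rw [List.countP_getElem_le_eq hsorted hp1] at h
    simp only [not_le, decide_eq_true_eq] at h
    omega
  have hthreshold : ∀ i ∈ Icc 1 (lam.getD 0 0),
      (i + transposeRow lam i) % 2 = r ∧ p ≤ (transposeRow lam i + r) / 2 ↔
        svalsGap lam i % 2 = r ∧ svalsGap lam i < V := by
    intro i hi
    have hi1 := (mem_Icc.mp hi).1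
    have h := List.le_getElem_iff_lt_countP (hsorted.imp le_of_lt) hp1 (svalsGap lam i + 1)
    simp only [Nat.add_one_le_iff, ← hV] at h
    have hcount : Lr.countP (svalsGap lam i < ·) = (transposeRow lam i + r) / 2 :=
      countP_filter_svals_mod_two_gt_svalsGap hsort hodd hBn hr hi1
    rw [svalsGap_mod_two hodd hi1, ← hcount]
    omega
  rw [hgetD, filter_congr hthreshold, card_filter_svalsGap_lt hsort hr hVle hVr, hbelow]

end symbol

theorem topRow_getD (μ : List ℕ) (j : ℕ) :
    (topRow μ).getD j 0 = ((oddVals μ).getD j 0 - 1) / 2 - j := by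
  simp only [topRow, List.getD_eq_getElem?_getD, List.getElem?_mapIdx]
  cases (oddVals μ)[j]? <;> simp

theorem botRow_getD (μ : List ℕ) (j : ℕ) :
    (botRow μ).getD j 0 = (evenVals μ).getD j 0 / 2 - j := by
  simp only [botRow, List.getD_eq_getElem?_getD, List.getElem?_mapIdx]
  cases (evenVals μ)[j]? <;> simp

theorem closed_formula_Bn_general (n : ℕ) (lam : List ℕ) (M : ℕ)
    (hsort : lam.Pairwise (· ≥ ·))
    (hsum : lam.sum = 2 * n + 1)
    (hBn : ∀ m : ℕ, Even m → Even (lam.count m))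
    (hM : M = (lam.length + 1) / 2) :
    (∀ p : ℕ, 1 ≤ p → p ≤ M →
      (topRow lam).getD (M - p) 0 =
        ((Finset.Icc 1 (lam.getD 0 0)).filter (fun i =>
          ((transposeRow lam i) % 2 = 1 ∧ i % 2 = 0 ∧
            p ≤ ((transposeRow lam i) + 1) / 2) ∨
          ((transposeRow lam i) % 2 = 0 ∧ i % 2 = 1 ∧
            p ≤ (transposeRow lam i) / 2))).card) ∧
    (∀ p : ℕ, 1 ≤ p → p ≤ M - 1 →
      (botRow lam).getD (M - 1 - p) 0 =
        ((Finset.Icc 1 (lam.getD 0 0)).filter (fun i =>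
          ((transposeRow lam i) % 2 = 0 ∧ i % 2 = 0 ∧
            p ≤ (transposeRow lam i) / 2) ∨
          ((transposeRow lam i) % 2 = 1 ∧ i % 2 = 1 ∧
            p ≤ ((transposeRow lam i) - 1) / 2))).card) := by
  have hodd : Odd lam.length := lam.odd_length_of_odd_sum hBn (hsum ▸ odd_two_mul_add_one n)
  have hM' : (lam.length + 0) / 2 = M - 1 := by obtain ⟨m, hm⟩ := hodd; omega
  refine ⟨fun p hp hpM => ?_, fun p hp hpM => ?_⟩
  · have h := symbol_entry_eq_card hsort hodd hBn le_rfl hp (hM ▸ hpM)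
    rw [← hM] at h
    rw [topRow_getD, oddVals, h]
    exact congrArg card (filter_congr fun i _ => by omega)
  · have h := symbol_entry_eq_card hsort hodd hBn zero_le_one hp (hM' ▸ hpM)
    rw [hM', Nat.sub_zero] at h
    rw [botRow_getD, evenVals, h]
    exact congrArg card (filter_congr fun i _ => by omega)

/-- **Closed formula for the symbol, `B_n` theory.**  For a rigid `B_n`
partition `lam` of `2n+1` with length `l` and `M = (l+1)/2`, the symbol
`(α_1, …, α_M; β_1, …, β_{M-1})` of `lam` satisfies, for `1 ≤ p ≤ M`:
`α_{M+1-p}` equals the number of `1 ≤ i ≤ λ_1` for which either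
(`λ^T_i` odd, `i` even, `(λ^T_i+1)/2 ≥ p`) or (`λ^T_i` even, `i` odd,
`λ^T_i/2 ≥ p`); and for `1 ≤ p ≤ M-1`: `β_{M-p}` equals the number of
`1 ≤ i ≤ λ_1` for which either (`λ^T_i` even, `i` even, `λ^T_i/2 ≥ p`) or
(`λ^T_i` odd, `i` odd, `(λ^T_i-1)/2 ≥ p`).  (1-based entry `α_q` is the
0-based entry `q - 1` of `topRow lam`, similarly for `β`.) -/
theorem closed_formula_Bn (n : ℕ) (lam : List ℕ) (M : ℕ)
    (hsort : lam.Pairwise (· ≥ ·))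
    (hpos : ∀ x ∈ lam, 0 < x)
    (hsum : lam.sum = 2 * n + 1)
    (hBn : ∀ m : ℕ, Even m → Even (lam.count m))
    (hgap : ∀ i : ℕ, i + 1 < lam.length → lam.getD i 0 ≤ lam.getD (i + 1) 0 + 1)
    (hrig : ∀ m : ℕ, Odd m → lam.count m ≠ 2)
    (hM : M = (lam.length + 1) / 2) :
    (∀ p : ℕ, 1 ≤ p → p ≤ M →
      (topRow lam).getD (M - p) 0 =
        ((Finset.Icc 1 (lam.getD 0 0)).filter (fun i =>
          ((transposeRow lam i) % 2 = 1 ∧ i % 2 = 0 ∧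
            p ≤ ((transposeRow lam i) + 1) / 2) ∨
          ((transposeRow lam i) % 2 = 0 ∧ i % 2 = 1 ∧
            p ≤ (transposeRow lam i) / 2))).card) ∧
    (∀ p : ℕ, 1 ≤ p → p ≤ M - 1 →
      (botRow lam).getD (M - 1 - p) 0 =
        ((Finset.Icc 1 (lam.getD 0 0)).filter (fun i =>
          ((transposeRow lam i) % 2 = 0 ∧ i % 2 = 0 ∧
            p ≤ (transposeRow lam i) / 2) ∨
          ((transposeRow lam i) % 2 = 1 ∧ i % 2 = 1 ∧
            p ≤ ((transposeRow lam i) - 1) / 2))).card) :=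
  closed_formula_Bn_general n lam M hsort hsum hBn hM
end

section
/- Let λ be a rigid C_n partition such that every nonempty row of its transposed diagram is even, i.e. λ^T_i is even for every 1 ≤ i ≤ λ_1. Let M be the common number of entries in each row of its symbol (α_1, …, α_M; β_1, …, β_M) in the C_n theory. Then α_i ≤ β_i for every 1 ≤ i ≤ M. -/
/-! If every column length `λ^T_i` is even, then so is every multiplicity
`#{j | λ_j = m} = λ^T_m - λ^T_{m+1}`; after padding to even length the partition is therefore
a list of equal pairs `a, a`. Prepending a pair `a, a` to such a list `l` prepends the two
consecutive values `v + 1, v` (with `v = |l| + a`) to its `s`-sequence, so it appends one new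
entry to each row of the symbol, in the same position `p`: `⌊v/2⌋ - p` to the top row and
`⌈v/2⌉ - p` to the bottom row. -/

inductive Doubled {α : Type*} : List α → Prop
  | nil : Doubled []
  | cons (a : α) {l : List α} : Doubled l → Doubled (a :: a :: l)

theorem doubled_of_pairwise_of_even_count {α : Type*} [LinearOrder α] :
    ∀ {l : List α}, l.Pairwise (· ≥ ·) → (∀ m, Even (l.count m)) → Doubled l
  | [], _, _ => .nil
  | [a], _, hc => absurd (hc a) (by simp)
  | a :: b :: t, hs, hc => by
    have hmem : a ∈ b :: t := by
      by_contra hnot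
      simpa [List.count_eq_zero.mpr hnot] using hc a
    have hba : b = a := by
      rcases List.mem_cons.mp hmem with h | h
      · exact h.symm
      · exact le_antisymm (List.rel_of_pairwise_cons hs (List.mem_cons_self ..))
          (List.rel_of_pairwise_cons hs.of_cons h)
    subst hba
    refine .cons b (doubled_of_pairwise_of_even_count hs.of_cons.of_cons fun m => ?_)
    have hcount : (b :: b :: t).count m = t.count m + 2 * (if b = m then 1 else 0) := by
      simp only [List.count_cons, beq_iff_eq]
      split_ifs <;> omega
    exact (Nat.even_add.mp (hcount ▸ hc m)).mpr (even_two_mul _)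

theorem count_add_countP_succ_le (l : List ℕ) (m : ℕ) :
    l.count m + l.countP (fun a => decide (m + 1 ≤ a)) = l.countP (fun a => decide (m ≤ a)) := by
  induction l with
  | nil => rfl
  | cons a t ih =>
    simp only [List.countP_cons, List.count_cons, decide_eq_true_eq, beq_iff_eq]
    split_ifs <;> omega

theorem even_count_of_even_countP_le {l : List ℕ}
    (h : ∀ i, Even (l.countP (fun a => decide (i ≤ a)))) (m : ℕ) : Even (l.count m) := by
  have := count_add_countP_succ_le l m
  have := h m
  have := h (m + 1)
  rw [Nat.even_iff] at *
  omega

def padEven (l : List ℕ) : List ℕ :=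
  if l.length % 2 = 1 then l ++ [0] else l

theorem even_length_padEven (l : List ℕ) : Even (padEven l).length := by
  unfold padEven
  split_ifs with h
  · rw [List.length_append, List.length_singleton, Nat.even_add_one, Nat.even_iff]
    omega
  · rw [Nat.even_iff]
    omega

theorem countP_le_padEven {l : List ℕ} {i : ℕ} (hi : 1 ≤ i) :
    (padEven l).countP (fun a => decide (i ≤ a)) = l.countP (fun a => decide (i ≤ a)) := by
  unfold padEven
  split_ifs <;> simp [List.countP_append]
  omega

theorem pairwise_ge_padEven {l : List ℕ} (hl : l.Pairwise (· ≥ ·)) :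
    (padEven l).Pairwise (· ≥ ·) := by
  unfold padEven
  split_ifs
  · simpa [List.pairwise_append] using hl
  · exact hl

theorem even_countP_le_of_le_head {l : List ℕ} (hl : l.Pairwise (· ≥ ·))
    (h : ∀ i, 1 ≤ i → i ≤ l.getD 0 0 → l.countP (fun a => decide (i ≤ a)) % 2 = 0)
    {i : ℕ} (hi : 1 ≤ i) : Even (l.countP (fun a => decide (i ≤ a))) := by
  rcases l with _ | ⟨a, t⟩
  · simp
  rcases le_or_gt i a with hia | hai
  · exact Nat.even_iff.mpr (h i hi hia)
  · rw [List.countP_eq_zero.mpr]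
    · exact ⟨0, rfl⟩
    · intro x hx
      have : x ≤ a := by
        rcases List.mem_cons.mp hx with rfl | hxt
        · exact le_rfl
        · exact List.rel_of_pairwise_cons hl hxt
      simp only [decide_eq_true_eq]
      omega

theorem svals_cons_cons (a : ℕ) (l : List ℕ) :
    svals (a :: a :: l) = (l.length + a + 1) :: (l.length + a) :: svals l := by
  simp only [svals, List.mapIdx_cons, List.length_cons, List.cons.injEq]
  refine ⟨by omega, by omega, ?_⟩
  congr 1
  funext k b
  omega

theorem exists_oddVals_evenVals_cons_cons (a : ℕ) (l : List ℕ) :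
    ∃ w w', oddVals (a :: a :: l) = oddVals l ++ [w] ∧
      evenVals (a :: a :: l) = evenVals l ++ [w'] ∧ (w - 1) / 2 ≤ w' / 2 := by
  rcases Nat.mod_two_eq_zero_or_one (l.length + a) with h | h
  · refine ⟨l.length + a + 1, l.length + a, ?_, ?_, by omega⟩ <;>
      simp [oddVals, evenVals, svals_cons_cons, h, Nat.add_mod]
  · refine ⟨l.length + a, l.length + a + 1, ?_, ?_, by omega⟩ <;>
      simp [oddVals, evenVals, svals_cons_cons, h, Nat.add_mod]

theorem Doubled.length_oddVals {L : List ℕ} (hL : Doubled L) :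
    (oddVals L).length = (evenVals L).length := by
  induction hL with
  | nil => rfl
  | @cons a l _ ih =>
    obtain ⟨w, w', hw, hw', -⟩ := exists_oddVals_evenVals_cons_cons a l
    simp [hw, hw', ih]

theorem Doubled.topRow_le_botRow {L : List ℕ} (hL : Doubled L) :
    ∀ i < (topRow L).length, (topRow L).getD i 0 ≤ (botRow L).getD i 0 := by
  induction hL with
  | nil => simp [topRow, oddVals, svals]
  | @cons a l hl ih =>
    obtain ⟨w, w', hw, hw', hww'⟩ := exists_oddVals_evenVals_cons_cons a l
    have hlen : (botRow l).length = (topRow l).length := by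
      simpa [topRow, botRow] using hl.length_oddVals.symm
    have htop : topRow (a :: a :: l) = topRow l ++ [(w - 1) / 2 - (topRow l).length] := by
      rw [topRow, hw, List.mapIdx_concat, topRow, List.length_mapIdx]
    have hbot : botRow (a :: a :: l) = botRow l ++ [w' / 2 - (topRow l).length] := by
      rw [botRow, hw', List.mapIdx_concat, botRow, ← hlen, botRow, List.length_mapIdx]
    intro i hi
    rw [htop, List.length_append, List.length_singleton] at hi
    rw [htop, hbot]
    rcases Nat.lt_or_ge i (topRow l).length with h | h
    · rw [List.getD_append _ _ _ _ h, List.getD_append _ _ _ _ (hlen ▸ h)]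
      exact ih i h
    · obtain rfl : i = (topRow l).length := by omega
      rw [List.getD_append_right _ _ _ _ le_rfl, List.getD_append_right _ _ _ _ hlen.le, hlen]
      simpa using Nat.sub_le_sub_right hww' _

theorem Cn_symbol_ineq_allEvenRows_general (lam : List ℕ)
    (hsort : lam.Pairwise (· ≥ ·))
    (halleven : ∀ i : ℕ, 1 ≤ i → i ≤ lam.getD 0 0 →
      (lam.countP (fun a => decide (i ≤ a))) % 2 = 0) :
    ∀ lam' : List ℕ, lam' = (if lam.length % 2 = 1 then lam ++ [0] else lam) →
    ∀ M : ℕ, M = (topRow lam').length →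
    ∀ i : ℕ, 1 ≤ i → i ≤ M →
      (topRow lam').getD (i - 1) 0 ≤ (botRow lam').getD (i - 1) 0 := by
  rintro _ rfl M rfl i hi hiM
  change i ≤ (topRow (padEven lam)).length at hiM
  have hcols : ∀ j, Even ((padEven lam).countP (fun a => decide (j ≤ a))) := by
    rintro (_ | j)
    · simpa using even_length_padEven lam
    · rw [countP_le_padEven j.succ_pos]
      exact even_countP_le_of_le_head hsort halleven j.succ_pos
  have hdoubled : Doubled (padEven lam) :=
    doubled_of_pairwise_of_even_count (pairwise_ge_padEven hsort)
      (even_count_of_even_countP_le hcols)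
  exact hdoubled.topRow_le_botRow (i - 1) (by omega)

/-- For a rigid `C_n` partition `lam` all of whose nonempty transposed rows
`λ^T_i` (`1 ≤ i ≤ λ_1`) are even, the symbol `(α_1, …, α_M; β_1, …, β_M)` of
`lam` in the `C_n` theory (computed from `lam` padded with one `0` when its
length is odd, `M` the common row length) satisfies `α_i ≤ β_i` for all
`1 ≤ i ≤ M`. -/
theorem Cn_symbol_ineq_allEvenRows (n : ℕ) (hn : 0 < n) (lam : List ℕ)
    (hsort : lam.Pairwise (· ≥ ·))
    (hpos : ∀ x ∈ lam, 0 < x)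
    (hsum : lam.sum = 2 * n)
    (hCn : ∀ m : ℕ, Odd m → Even (lam.count m))
    (hgap : ∀ i : ℕ, i + 1 < lam.length → lam.getD i 0 ≤ lam.getD (i + 1) 0 + 1)
    (hrig : ∀ m : ℕ, Even m → lam.count m ≠ 2)
    (halleven : ∀ i : ℕ, 1 ≤ i → i ≤ lam.getD 0 0 →
      (lam.countP (fun a => decide (i ≤ a))) % 2 = 0) :
    ∀ lam' : List ℕ, lam' = (if lam.length % 2 = 1 then lam ++ [0] else lam) →
    ∀ M : ℕ, M = (topRow lam').length →
    ∀ i : ℕ, 1 ≤ i → i ≤ M →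
      (topRow lam').getD (i - 1) 0 ≤ (botRow lam').getD (i - 1) 0 :=
  Cn_symbol_ineq_allEvenRows_general lam hsort halleven
end

section
/- Let λ be a rigid D_n partition with length l (so l is even), M = l/2, and symbol (α_1, …, α_M; β_1, …, β_{M+1}) in the D_n theory. Then α_i ≥ β_{i+1} for every 1 ≤ i ≤ M. -/
/-!
Let `s` be the strictly decreasing sequence of the numbers `s_k` of `λ` with a part `0` appended.
Below every even cutoff, `s` has more even than odd entries, and overall at most two more.
This survives putting an odd part or a pair of equal parts on top of `λ` (the new entries of `s`
exceed the old ones, and an odd part adds an entry of the parity that restores the balance), and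
every `D_n` partition is built this way. At the cutoff `2f_i + 2` there are at least `i` odd
entries, hence at least `i + 1` even ones, i.e. `2g_{i+1} ≤ 2f_i + 2`, which is `β_{i+1} ≤ α_i`;
the overall bound gives at least `l/2` odd entries, so `α_i` exists.
-/

namespace DnSymbol

open List

theorem svals_cons (a : ℕ) (μ : List ℕ) : svals (a :: μ) = (μ.length + a) :: svals μ := by
  simp only [svals, mapIdx_cons, length_cons, Nat.add_sub_cancel, Nat.sub_zero, cons.injEq,
    true_and]
  exact mapIdx_eq_mapIdx_iff.2 fun i => by omega

theorem length_svals (μ : List ℕ) : (svals μ).length = μ.length :=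
  length_mapIdx

theorem lt_of_mem_svals {μ : List ℕ} {a : ℕ} (hμ : ∀ x ∈ μ, x ≤ a) :
    ∀ s ∈ svals μ, s < μ.length + a := by
  induction μ with
  | nil => simp [svals]
  | cons b μ ih =>
    simp only [svals_cons, mem_cons, forall_eq_or_imp, length_cons] at hμ ⊢
    exact ⟨by omega, fun s hs => (ih hμ.2 s hs).trans (by omega)⟩

theorem pairwise_gt_svals {μ : List ℕ} (hμ : μ.Pairwise (· ≥ ·)) : (svals μ).Pairwise (· > ·) := by
  induction μ with
  | nil => simp [svals]
  | cons a μ ih =>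
    rw [pairwise_cons] at hμ
    rw [svals_cons, pairwise_cons]
    exact ⟨lt_of_mem_svals hμ.1, ih hμ.2⟩

theorem countP_odd_add_countP_even (S : List ℕ) :
    S.countP (· % 2 = 1) + S.countP (· % 2 = 0) = S.length := by
  induction S with
  | nil => rfl
  | cons x S ih => simp only [countP_cons, length_cons, decide_eq_true_eq]; split_ifs <;> omega

def OddMinority (S : List ℕ) : Prop :=
  S.countP (· % 2 = 0) ≤ S.countP (· % 2 = 1) + 2 ∧
    ∀ t, t % 2 = 0 →
      (S.filter (· ≤ t)).countP (· % 2 = 1) < (S.filter (· ≤ t)).countP (· % 2 = 0)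

theorem oddMinority_svals_singleton_zero : OddMinority (svals [0]) :=
  ⟨by decide, fun t _ => by simp [show svals [0] = [0] from rfl]⟩

theorem filter_le_eq_self {S : List ℕ} {x t : ℕ} (hx : ∀ y ∈ S, y < x) (ht : x ≤ t) :
    S.filter (· ≤ t) = S :=
  filter_eq_self.2 fun y hy => decide_eq_true (by have := hx y hy; omega)

namespace OddMinority

variable {S : List ℕ} {x : ℕ}

theorem cons (hS : OddMinority S) (hx : ∀ y ∈ S, y < x) (hpar : (x + S.length) % 2 = 1) :
    OddMinority (x :: S) := by
  have hlen := countP_odd_add_countP_even S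
  refine ⟨?_, fun t ht => ?_⟩
  · have := hS.1
    simp only [countP_cons, decide_eq_true_eq]
    split_ifs <;> omega
  · rw [filter_cons]
    by_cases hxt : x ≤ t
    · have hbal := hS.2 t ht
      rw [filter_le_eq_self hx hxt] at hbal
      simp only [hxt, decide_true, ↓reduceIte, filter_le_eq_self hx hxt, countP_cons,
        decide_eq_true_eq]
      split_ifs <;> omega
    · simpa [hxt] using hS.2 t ht

theorem cons_cons (hS : OddMinority S) (hx : ∀ y ∈ S, y < x) :
    OddMinority ((x + 1) :: x :: S) := by
  refine ⟨?_, fun t ht => ?_⟩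
  · have := hS.1
    simp only [countP_cons, decide_eq_true_eq]
    split_ifs <;> omega
  · have hbal := hS.2 t ht
    rw [filter_cons, filter_cons]
    by_cases hxt : x ≤ t
    · rw [filter_le_eq_self hx hxt] at hbal ⊢
      by_cases hxt' : x + 1 ≤ t
      · simp only [hxt, hxt', decide_true, ↓reduceIte, countP_cons, decide_eq_true_eq]
        split_ifs <;> omega
      · simp only [hxt, hxt', decide_true, decide_false, ↓reduceIte, countP_cons,
          decide_eq_true_eq, Bool.false_eq_true]
        split_ifs <;> omega
    · have hxt' : ¬ x + 1 ≤ t := by omega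
      simpa [hxt, hxt'] using hbal

end OddMinority

theorem dnPartition_induction {P : List ℕ → Prop} (nil : P [])
    (odd : ∀ a σ, a % 2 = 1 → (∀ x ∈ σ, x ≤ a) → P σ → P (a :: σ))
    (pair : ∀ a σ, (∀ x ∈ σ, x ≤ a) → P σ → P (a :: a :: σ)) :
    ∀ σ : List ℕ, σ.Pairwise (· ≥ ·) → (∀ m, Even m → Even (σ.count m)) → P σ
  | [], _, _ => nil
  | a :: σ, hsort, hDn => by
    obtain ⟨hle, hσ⟩ := pairwise_cons.1 hsort
    rcases Nat.mod_two_eq_zero_or_one a with ha | ha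
    · -- the even part `a` occurs again, hence (by sortedness) right below itself
      have ha_mem : a ∈ σ := by
        have := hDn a (Nat.even_iff.2 ha)
        rw [count_cons_self, Nat.even_add_one, Nat.not_even_iff_odd] at this
        exact count_pos_iff.1 this.pos
      obtain ⟨b, σ, rfl⟩ := exists_cons_of_ne_nil (ne_nil_of_mem ha_mem)
      obtain ⟨hbσ, hσ'⟩ := pairwise_cons.1 hσ
      obtain rfl : b = a := by
        rcases mem_cons.1 ha_mem with h | h
        · exact h.symm
        · exact le_antisymm (hle b mem_cons_self) (hbσ a h)
      refine pair b σ (fun x hx => hle x (mem_cons_of_mem b hx)) ?_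
      refine dnPartition_induction nil odd pair σ hσ' fun m hm => ?_
      have := hDn m hm
      simp only [count_cons, beq_iff_eq] at this
      split_ifs at this <;> simpa [Nat.even_add_one] using this
    · refine odd a σ ha hle (dnPartition_induction nil odd pair σ hσ fun m hm => ?_)
      have ham : a ≠ m := by rintro rfl; exact Nat.not_even_iff_odd.2 (Nat.odd_iff.2 ha) hm
      simpa [count_cons, ham] using hDn m hm
termination_by σ => σ.length

theorem oddMinority_svals {σ : List ℕ} (hsort : σ.Pairwise (· ≥ ·))
    (hDn : ∀ m, Even m → Even (σ.count m)) : OddMinority (svals (σ ++ [0])) := by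
  refine dnPartition_induction (P := fun σ => OddMinority (svals (σ ++ [0])))
    oddMinority_svals_singleton_zero ?_ ?_ σ hsort hDn
  · intro a σ ha hσ hS
    have hσ0 : ∀ x ∈ σ ++ [0], x ≤ a := by simpa [or_imp, forall_and] using hσ
    rw [cons_append, svals_cons]
    exact hS.cons (lt_of_mem_svals hσ0) (by rw [length_svals]; omega)
  · intro a σ hσ hS
    have hσ0 : ∀ x ∈ σ ++ [0], x ≤ a := by simpa [or_imp, forall_and] using hσ
    rw [cons_append, cons_append, svals_cons, svals_cons]
    convert hS.cons_cons (lt_of_mem_svals hσ0) using 2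
    simp only [length_cons]
    omega

theorem lt_countP_le_iff {L : List ℕ} (hL : L.Pairwise (· ≤ ·)) {i B : ℕ} :
    i < L.countP (· ≤ B) ↔ ∃ h : i < L.length, L[i] ≤ B := by
  induction L generalizing i with
  | nil => simp
  | cons a L ih =>
    obtain ⟨haL, hL⟩ := pairwise_cons.1 hL
    by_cases haB : a ≤ B
    · cases i with
      | zero => simp [haB]
      | succ i => simp [haB, ih hL]
    · have hzero : L.countP (· ≤ B) = 0 :=
        countP_eq_zero.2 fun x hx => by have := haL x hx; simp only [decide_eq_true_eq]; omega
      rw [countP_cons, hzero, if_neg (by simpa using haB)]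
      refine ⟨fun h => absurd h (Nat.not_lt_zero _), fun ⟨h, hle⟩ => (haB ?_).elim⟩
      cases i with
      | zero => simpa using hle
      | succ i => exact (haL _ (getElem_mem _)).trans hle

theorem countP_le_oddVals (μ : List ℕ) (B : ℕ) :
    (oddVals μ).countP (· ≤ B) = ((svals μ).filter (· ≤ B)).countP (· % 2 = 1) := by
  simp only [oddVals, countP_reverse, countP_filter, Bool.and_comm]

theorem countP_le_evenVals (μ : List ℕ) (B : ℕ) :
    (evenVals μ).countP (· ≤ B) = ((svals μ).filter (· ≤ B)).countP (· % 2 = 0) := by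
  simp only [evenVals, countP_reverse, countP_filter, Bool.and_comm]

theorem length_oddVals (μ : List ℕ) : (oddVals μ).length = (svals μ).countP (· % 2 = 1) := by
  simp [oddVals, countP_eq_length_filter]

theorem pairwise_le_oddVals {μ : List ℕ} (hμ : μ.Pairwise (· ≥ ·)) :
    (oddVals μ).Pairwise (· ≤ ·) :=
  pairwise_reverse.2 <| ((pairwise_gt_svals hμ).filter _).imp le_of_lt

theorem pairwise_le_evenVals {μ : List ℕ} (hμ : μ.Pairwise (· ≥ ·)) :
    (evenVals μ).Pairwise (· ≤ ·) :=
  pairwise_reverse.2 <| ((pairwise_gt_svals hμ).filter _).imp le_of_lt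

theorem odd_of_mem_oddVals {μ : List ℕ} {v : ℕ} (hv : v ∈ oddVals μ) : v % 2 = 1 := by
  simp only [oddVals, mem_reverse, mem_filter, decide_eq_true_eq] at hv
  exact hv.2

theorem botRow_getD_le_topRow_getD {μ : List ℕ} (hμ : μ.Pairwise (· ≥ ·))
    (hS : OddMinority (svals μ)) {i : ℕ} (hi : 1 ≤ i) (hiμ : i ≤ (oddVals μ).length) :
    (botRow μ).getD i 0 ≤ (topRow μ).getD (i - 1) 0 := by
  have hv : i - 1 < (oddVals μ).length := by omega
  set v := (oddVals μ)[i - 1]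
  have hv_odd : v % 2 = 1 := odd_of_mem_oddVals (getElem_mem hv)
  have hodd : i - 1 < (oddVals μ).countP (· ≤ v + 1) :=
    (lt_countP_le_iff (pairwise_le_oddVals hμ)).2 ⟨hv, Nat.le_succ v⟩
  have heven : i < (evenVals μ).countP (· ≤ v + 1) := by
    have := hS.2 (v + 1) (by omega)
    rw [countP_le_oddVals] at hodd
    rw [countP_le_evenVals]
    omega
  obtain ⟨he, hev⟩ := (lt_countP_le_iff (pairwise_le_evenVals hμ)).1 heven
  rw [getD_eq_getElem _ _ (by simpa [botRow] using he),
    getD_eq_getElem _ _ (by simpa [topRow] using hv)]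
  simp only [botRow, topRow, getElem_mapIdx]
  omega

theorem length_div_two_le_length_oddVals {σ : List ℕ} (hS : OddMinority (svals (σ ++ [0]))) :
    σ.length / 2 ≤ (oddVals (σ ++ [0])).length := by
  have hsplit := countP_odd_add_countP_even (svals (σ ++ [0]))
  rw [length_svals, length_append, length_singleton] at hsplit
  rw [length_oddVals]
  have := hS.1
  omega

end DnSymbol

theorem Dn_symbol_ineq_general (lam : List ℕ) (M : ℕ)
    (hsort : lam.Pairwise (· ≥ ·))
    (hDn : ∀ m : ℕ, Even m → Even (lam.count m))
    (hM : M = lam.length / 2) :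
    ∀ i : ℕ, 1 ≤ i → i ≤ M →
      (botRow (lam ++ [0])).getD i 0 ≤ (topRow (lam ++ [0])).getD (i - 1) 0 := by
  intro i hi hiM
  have hS := DnSymbol.oddMinority_svals hsort hDn
  have hsort₀ : (lam ++ [0]).Pairwise (· ≥ ·) :=
    List.pairwise_append.2 ⟨hsort, List.pairwise_singleton _ _, by simp⟩
  exact DnSymbol.botRow_getD_le_topRow_getD hsort₀ hS hi
    ((hiM.trans_eq hM).trans (DnSymbol.length_div_two_le_length_oddVals hS))

/-- For a rigid `D_n` partition `lam` with (even) length `l`, `M = l/2`, and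
symbol `(α_1, …, α_M; β_1, …, β_{M+1})` in the `D_n` theory (computed from
`lam ++ [0]`), one has `α_i ≥ β_{i+1}` for every `1 ≤ i ≤ M` (1-based entry
`α_q` is the 0-based entry `q - 1` of `topRow (lam ++ [0])`, similarly
for `β`). -/
theorem Dn_symbol_ineq (n : ℕ) (hn : 0 < n) (lam : List ℕ) (M : ℕ)
    (hsort : lam.Pairwise (· ≥ ·))
    (hpos : ∀ x ∈ lam, 0 < x)
    (hsum : lam.sum = 2 * n)
    (hDn : ∀ m : ℕ, Even m → Even (lam.count m))
    (hgap : ∀ i : ℕ, i + 1 < lam.length → lam.getD i 0 ≤ lam.getD (i + 1) 0 + 1)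
    (hrig : ∀ m : ℕ, Odd m → lam.count m ≠ 2)
    (hM : M = lam.length / 2) :
    ∀ i : ℕ, 1 ≤ i → i ≤ M →
      (botRow (lam ++ [0])).getD i 0 ≤ (topRow (lam ++ [0])).getD (i - 1) 0 :=
  Dn_symbol_ineq_general lam M hsort hDn hM
end
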